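/- arXiv:2305.09747 — 3 statements merged into one kernel-verified Lean document; each statement's English description precedes it below -/
import Mathlib

section
/- Let G be a group and ω : G³ → U(1) a 3-cocycle, i.e., ω(h,k,l)·ω(g,hk,l)·ω(g,h,k) = ω(gh,k,l)·ω(g,h,kl) for all g,h,k,l ∈ G. Define the slant product θ_x(g,h) = ω(x,g,h)·ω(g,h,(gh)^{-1} x (gh)) / ω(g, g^{-1} x g, h). Then θ satisfies the twisted (conjugated) 2-cocycle condition: θ_{g^{-1} x g}(h,l) · θ_x(g, hl) = θ_x(gh, l) · θ_x(g, h) for all x, g, h, l ∈ G. -/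
/-- The slant product of a 3-cocycle `ω`:
`θ_x(g,h) = ω(x,g,h) · ω(g,h,(gh)⁻¹ x (gh)) / ω(g, g⁻¹ x g, h)`. -/
noncomputable def slantProduct {G : Type*} [Group G] (ω : G → G → G → Circle)
    (x g h : G) : Circle :=
  ω x g h * ω g h ((g * h)⁻¹ * x * (g * h)) / ω g (g⁻¹ * x * g) h

/-- The slant product of a 3-cocycle satisfies the twisted (conjugated) 2-cocycle condition:
`θ_{g⁻¹xg}(h,l) · θ_x(g, hl) = θ_x(gh, l) · θ_x(g, h)`. -/
theorem slantProduct_twisted_two_cocycle {G : Type*} [Group G]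
    (ω : G → G → G → Circle)
    (hω : ∀ g h k l : G,
      ω h k l * ω g (h * k) l * ω g h k = ω (g * h) k l * ω g h (k * l)) :
    ∀ x g h l : G,
      slantProduct ω (g⁻¹ * x * g) h l * slantProduct ω x g (h * l)
        = slantProduct ω x (g * h) l * slantProduct ω x g h := by
  intro x g h l
  have e1 := Circle.coe_inj.mpr (hω x g h l)
  have e2 := Circle.coe_inj.mpr (hω g (g⁻¹*x*g) h l)
  have e3 := Circle.coe_inj.mpr (hω g h ((g*h)⁻¹*x*(g*h)) l)
  have e4 := Circle.coe_inj.mpr (hω g h l ((g*h*l)⁻¹*x*(g*h*l)))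
  apply Circle.coe_injective
  simp only [slantProduct, Circle.coe_mul, Circle.coe_div] at *
  simp only [mul_assoc, mul_inv_rev, inv_mul_cancel_left, mul_inv_cancel_left, inv_inv] at *
  field_simp
  apply mul_right_cancel₀ (Circle.coe_ne_zero (ω g (g⁻¹*(x*(g*h))) l))
  linear_combination
    ((ω h l (l⁻¹*(h⁻¹*(g⁻¹*(x*(g*(h*l)))))) : ℂ) * (ω x g (h*l) : ℂ)
      * (ω g (h*l) (l⁻¹*(h⁻¹*(g⁻¹*(x*(g*(h*l)))))) : ℂ)
      * (ω (g*h) (h⁻¹*(g⁻¹*(x*(g*h)))) l : ℂ)) * e2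
    - ((ω g (g⁻¹*(x*g)) (h*l) : ℂ) * (ω h l (l⁻¹*(h⁻¹*(g⁻¹*(x*(g*(h*l)))))) : ℂ)
      * (ω g (h*l) (l⁻¹*(h⁻¹*(g⁻¹*(x*(g*(h*l)))))) : ℂ)
      * (ω (g*h) (h⁻¹*(g⁻¹*(x*(g*h)))) l : ℂ)) * e1
    + ((ω g (g⁻¹*(x*g)) (h*l) : ℂ) * (ω (g*h) (h⁻¹*(g⁻¹*(x*(g*h)))) l : ℂ)
      * (ω x (g*h) l : ℂ) * (ω x g h : ℂ)) * e4
    - ((ω g (g⁻¹*(x*g)) (h*l) : ℂ) * (ω x (g*h) l : ℂ) * (ω x g h : ℂ)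
      * (ω (g*h) l (l⁻¹*(h⁻¹*(g⁻¹*(x*(g*(h*l)))))) : ℂ)) * e3
end

section
/- Let G be a group, ω a 3-cocycle on G valued in U(1), with slant product θ_x(g,h) = ω(x,g,h)ω(g,h,(gh)^{-1}x(gh))/ω(g,g^{-1}xg,h) and γ_g(x,y) = ω(x,y,g)ω(g,g^{-1}xg,g^{-1}yg)/ω(x,g,g^{-1}yg). Then for all g, h, x, y ∈ G: θ_g(x,y)·θ_h(x,y)·γ_x(g,h)·γ_y(x^{-1}gx, x^{-1}hx) = θ_{gh}(x,y)·γ_{xy}(g,h). -/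
/-- `γ_g(x,y) = ω(x,y,g) · ω(g, g⁻¹xg, g⁻¹yg) / ω(x, g, g⁻¹yg)`. -/
noncomputable def gammaProduct {G : Type*} [Group G] (ω : G → G → G → Circle)
    (g x y : G) : Circle :=
  ω x y g * ω g (g⁻¹ * x * g) (g⁻¹ * y * g) / ω x g (g⁻¹ * y * g)

/-- For a 3-cocycle `ω` with slant product `θ` and `γ` as above, for all `g, h, x, y ∈ G`:
`θ_g(x,y) · θ_h(x,y) · γ_x(g,h) · γ_y(x⁻¹gx, x⁻¹hx) = θ_{gh}(x,y) · γ_{xy}(g,h)`. -/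
theorem slant_gamma_identity {G : Type*} [Group G]
    (ω : G → G → G → Circle)
    (hω : ∀ g h k l : G,
      ω h k l * ω g (h * k) l * ω g h k = ω (g * h) k l * ω g h (k * l)) :
    ∀ g h x y : G,
      slantProduct ω g x y * slantProduct ω h x y * gammaProduct ω x g h *
          gammaProduct ω y (x⁻¹ * g * x) (x⁻¹ * h * x)
        = slantProduct ω (g * h) x y * gammaProduct ω (x * y) g h := by
  intro g h x y
  have e1 := hω g h x y
  have e2 := hω x y ((x*y)⁻¹ * g * (x*y)) ((x*y)⁻¹ * h * (x*y))
  have e3 := hω x (x⁻¹*g*x) (x⁻¹*h*x) y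
  have e4 := hω g x (x⁻¹*h*x) y
  have e5 := hω x (x⁻¹*g*x) y (y⁻¹*(x⁻¹*h*x)*y)
  have e6 := hω g x y ((x*y)⁻¹ * h * (x*y))
  simp only [slantProduct, gammaProduct]
  rw [← Circle.coe_inj] at e1 e2 e3 e4 e5 e6 ⊢
  push_cast at e1 e2 e3 e4 e5 e6 ⊢
  simp only [mul_assoc, mul_inv_rev, inv_inv, inv_mul_cancel_left, mul_inv_cancel_left,
    inv_mul_cancel, mul_inv_cancel, one_mul, mul_one] at e1 e2 e3 e4 e5 e6 ⊢
  simp only [div_mul_div_comm]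
  rw [div_eq_div_iff (by apply_rules [mul_ne_zero, Circle.coe_ne_zero]) (by apply_rules [mul_ne_zero, Circle.coe_ne_zero])]
  have mono :
      ((ω g x y : ℂ) * ↑(ω x y (y⁻¹ * (x⁻¹ * (g * (x * y))))) *
        (↑(ω h x y) * ↑(ω x y (y⁻¹ * (x⁻¹ * (h * (x * y))))) *
          (↑(ω g h x) * ↑(ω x (x⁻¹ * (g * x)) (x⁻¹ * (h * x))) *
            (↑(ω (x⁻¹ * (g * x)) (x⁻¹ * (h * x)) y) *
              ↑(ω y (y⁻¹ * (x⁻¹ * (g * (x * y)))) (y⁻¹ * (x⁻¹ * (h * (x * y)))))))) *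
      (↑(ω x (x⁻¹ * (g * (h * x))) y) * ↑(ω g (x * y) (y⁻¹ * (x⁻¹ * (h * (x * y))))))) *
      ((↑(ω (g * h) x y) * ↑(ω g h (x * y))) *
       (↑(ω (x * y) (y⁻¹ * (x⁻¹ * (g * (x * y)))) (y⁻¹ * (x⁻¹ * (h * (x * y))))) *
          ↑(ω x y (y⁻¹ * (x⁻¹ * (g * (h * (x * y))))))) *
       (↑(ω (g * x) (x⁻¹ * (h * x)) y) * ↑(ω x (x⁻¹ * (g * x)) (x⁻¹ * (h * (x * y))))) *
       (↑(ω x (x⁻¹ * (h * x)) y) * (↑(ω g (h * x) y) * ↑(ω g x (x⁻¹ * (h * x))))) *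
       (↑(ω (x⁻¹ * (g * x)) y (y⁻¹ * (x⁻¹ * (h * (x * y))))) *
      (↑(ω x (x⁻¹ * (g * (x * y))) (y⁻¹ * (x⁻¹ * (h * (x * y))))) * ↑(ω x (x⁻¹ * (g * x)) y))) *
       (↑(ω (g * x) y (y⁻¹ * (x⁻¹ * (h * (x * y))))) * ↑(ω g x (x⁻¹ * (h * (x * y))))))
    = (↑(ω (g * h) x y) * ↑(ω x y (y⁻¹ * (x⁻¹ * (g * (h * (x * y)))))) *
        (↑(ω g h (x * y)) * ↑(ω (x * y) (y⁻¹ * (x⁻¹ * (g * (x * y)))) (y⁻¹ * (x⁻¹ * (h * (x * y)))))) *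
      (↑(ω x (x⁻¹ * (g * x)) y) *
        (↑(ω x (x⁻¹ * (h * x)) y) * (↑(ω g x (x⁻¹ * (h * x))) * ↑(ω (x⁻¹ * (g * x)) y (y⁻¹ * (x⁻¹ * (h * (x * y))))))))) *
      ((↑(ω h x y) * (↑(ω g (h * x) y) * ↑(ω g h x))) *
       (↑(ω y (y⁻¹ * (x⁻¹ * (g * (x * y)))) (y⁻¹ * (x⁻¹ * (h * (x * y))))) *
      (↑(ω x (x⁻¹ * (g * (x * y))) (y⁻¹ * (x⁻¹ * (h * (x * y))))) * ↑(ω x y (y⁻¹ * (x⁻¹ * (g * (x * y))))))) *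
       (↑(ω (x⁻¹ * (g * x)) (x⁻¹ * (h * x)) y) * (↑(ω x (x⁻¹ * (g * (h * x))) y) * ↑(ω x (x⁻¹ * (g * x)) (x⁻¹ * (h * x))))) *
       (↑(ω (g * x) (x⁻¹ * (h * x)) y) * ↑(ω g x (x⁻¹ * (h * (x * y))))) *
       (↑(ω (g * x) y (y⁻¹ * (x⁻¹ * (h * (x * y))))) * ↑(ω x (x⁻¹ * (g * x)) (x⁻¹ * (h * (x * y))))) *
       (↑(ω x y (y⁻¹ * (x⁻¹ * (h * (x * y))))) * (↑(ω g (x * y) (y⁻¹ * (x⁻¹ * (h * (x * y))))) * ↑(ω g x y)))) := by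
    ring
  rw [e1, e2, e3, e4, e5, e6] at mono
  refine mul_right_cancel₀ ?_ mono
  apply_rules [mul_ne_zero, Circle.coe_ne_zero]
end

section
/- Let G = S_3 = ⟨a, x | a³ = e, x² = e, xax = a^{-1}⟩, and write each element uniquely as x^G a^g with G ∈ {0,1}, g ∈ {0,1,2}. Then the function ω((G,g),(H,h),(L,l)) = exp( (2πi·p₁/9)·g·(−1)^{H+L}·( h(−1)^L + l − [h(−1)^L + l]_3 ) )·exp(πi·p₂·G·H·L), for fixed p₁ ∈ {0,1,2} and p₂ ∈ {0,1}, satisfies the 3-cocycle condition ω(h̃,k̃,l̃)·ω(g̃, h̃k̃, l̃)·ω(g̃,h̃,k̃) = ω(g̃h̃, k̃, l̃)·ω(g̃, h̃, k̃l̃) for all g̃,h̃,k̃,l̃ ∈ S_3. -/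
/-- Multiplication in `S_3` in the coordinates `(G,g) ↔ x^G a^g`:
`(G,g)·(H,h) = (G+H mod 2, [g(−1)^H + h]_3)`. -/
def s3Mul (a b : ZMod 2 × ZMod 3) : ZMod 2 × ZMod 3 :=
  (a.1 + b.1, (if b.1 = 0 then a.2 else -a.2) + b.2)

/-- The 3-cochain on `S_3` (elements written as `(G,g) ↔ x^G a^g`):
`ω((G,g),(H,h),(L,l)) = exp((2πi p₁/9)·g·(−1)^{H+L}·(h(−1)^L + l − [h(−1)^L + l]_3))
  · exp(πi p₂ G H L)`. -/
noncomputable def s3Cocycle (p₁ p₂ : ℕ) (x y z : ZMod 2 × ZMod 3) : ℂ :=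
  Complex.exp (2 * Real.pi * Complex.I * p₁ / 9 *
      ((x.2.val : ℂ) * ((-1 : ℤ) ^ (y.1.val + z.1.val) : ℤ) *
        ((((-1 : ℤ) ^ z.1.val * (y.2.val : ℤ) + (z.2.val : ℤ)) -
          (((-1 : ℤ) ^ z.1.val * (y.2.val : ℤ) + (z.2.val : ℤ)) % 3) : ℤ)))) *
    Complex.exp (Real.pi * Complex.I * (p₂ * x.1.val * y.1.val * z.1.val))

/-- Integer exponent: `s3Cocycle p₁ p₂ x y z = exp(2πi/18 · s3Exp p₁ p₂ x y z)`. -/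
def s3Exp (p₁ p₂ : ℕ) (x y z : ZMod 2 × ZMod 3) : ℤ :=
  2 * p₁ * ((x.2.val : ℤ) * (-1) ^ (y.1.val + z.1.val) *
      (((-1 : ℤ) ^ z.1.val * (y.2.val : ℤ) + (z.2.val : ℤ)) -
        (((-1 : ℤ) ^ z.1.val * (y.2.val : ℤ) + (z.2.val : ℤ)) % 3))) +
    9 * p₂ * (x.1.val * y.1.val * z.1.val)

lemma s3Cocycle_eq (p₁ p₂ : ℕ) (x y z : ZMod 2 × ZMod 3) :
    s3Cocycle p₁ p₂ x y z =
      Complex.exp (2 * Real.pi * Complex.I / 18 * (s3Exp p₁ p₂ x y z : ℤ)) := by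
  rw [s3Cocycle, ← Complex.exp_add]
  congr 1
  unfold s3Exp
  push_cast
  ring

lemma exp_congr (a b : ℤ) (h : (a : ZMod 18) = (b : ZMod 18)) :
    Complex.exp (2 * Real.pi * Complex.I / 18 * (a : ℤ)) =
      Complex.exp (2 * Real.pi * Complex.I / 18 * (b : ℤ)) := by
  have hm : a ≡ b [ZMOD (18 : ℕ)] := (ZMod.intCast_eq_intCast_iff _ _ _).mp h
  obtain ⟨k, hk⟩ := Int.ModEq.dvd hm
  have hb : (b : ℂ) = (a : ℂ) + 18 * k := by
    have : b = a + 18 * k := by omega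
    rw [this]; push_cast; ring
  rw [hb, mul_add, Complex.exp_add]
  have : 2 * (Real.pi : ℂ) * Complex.I / 18 * (18 * k) = k * (2 * Real.pi * Complex.I) := by
    ring
  rw [this, Complex.exp_int_mul_two_pi_mul_I, mul_one]

lemma key_congr (p₁ p₂ : ℕ) (hp₁ : p₁ < 3) (hp₂ : p₂ < 2) :
    ∀ g h k l : ZMod 2 × ZMod 3,
      ((s3Exp p₁ p₂ h k l + s3Exp p₁ p₂ g (s3Mul h k) l + s3Exp p₁ p₂ g h k : ℤ) : ZMod 18) =
        ((s3Exp p₁ p₂ (s3Mul g h) k l + s3Exp p₁ p₂ g h (s3Mul k l) : ℤ) : ZMod 18) := by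
  interval_cases p₁ <;> interval_cases p₂ <;> decide

/-- The function `ω` above, for fixed `p₁ ∈ {0,1,2}` and `p₂ ∈ {0,1}`, satisfies the
3-cocycle condition on `S_3`:
`ω(h̃,k̃,l̃)·ω(g̃,h̃k̃,l̃)·ω(g̃,h̃,k̃) = ω(g̃h̃,k̃,l̃)·ω(g̃,h̃,k̃l̃)`. -/
theorem s3Cocycle_is_three_cocycle (p₁ p₂ : ℕ) (hp₁ : p₁ < 3) (hp₂ : p₂ < 2) :
    ∀ g h k l : ZMod 2 × ZMod 3,
      s3Cocycle p₁ p₂ h k l * s3Cocycle p₁ p₂ g (s3Mul h k) l * s3Cocycle p₁ p₂ g h k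
        = s3Cocycle p₁ p₂ (s3Mul g h) k l * s3Cocycle p₁ p₂ g h (s3Mul k l) := by
  intro g h k l
  rw [s3Cocycle_eq, s3Cocycle_eq, s3Cocycle_eq, s3Cocycle_eq, s3Cocycle_eq,
    ← Complex.exp_add, ← Complex.exp_add, ← Complex.exp_add]
  have hL : 2 * (Real.pi : ℂ) * Complex.I / 18 * (s3Exp p₁ p₂ h k l : ℤ) +
      2 * Real.pi * Complex.I / 18 * (s3Exp p₁ p₂ g (s3Mul h k) l : ℤ) +
      2 * Real.pi * Complex.I / 18 * (s3Exp p₁ p₂ g h k : ℤ) =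
      2 * Real.pi * Complex.I / 18 *
        ((s3Exp p₁ p₂ h k l + s3Exp p₁ p₂ g (s3Mul h k) l + s3Exp p₁ p₂ g h k : ℤ) : ℂ) := by
    push_cast; ring
  have hR : 2 * (Real.pi : ℂ) * Complex.I / 18 * (s3Exp p₁ p₂ (s3Mul g h) k l : ℤ) +
      2 * Real.pi * Complex.I / 18 * (s3Exp p₁ p₂ g h (s3Mul k l) : ℤ) =
      2 * Real.pi * Complex.I / 18 *
        ((s3Exp p₁ p₂ (s3Mul g h) k l + s3Exp p₁ p₂ g h (s3Mul k l) : ℤ) : ℂ) := by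
    push_cast; ring
  rw [hL, hR]
  exact exp_congr _ _ (key_congr p₁ p₂ hp₁ hp₂ g h k l)
end
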